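/- For every reward R ∈ ℝ^m with R ≤ 0, the admissible set admits the purely linear description D(R) = {Δ ∈ ℝ^n : Δ ≤ 0 and R + BΔ ≤ 0}. -/
import Mathlib


open Matrix MeasureTheory Filter Topology

noncomputable section

/-- The policy matrix `Π` of a deterministic policy `π`. -/
def polMat {n m : ℕ} (π : Fin n → Fin m) : Matrix (Fin n) (Fin m) ℝ :=
  Matrix.of fun i j => if j = π i then 1 else 0

/-- The matrix `S` with `S^j_i = 1` iff `s j = i`. -/
def projMat {n m : ℕ} (s : Fin m → Fin n) : Matrix (Fin m) (Fin n) ℝ :=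
  Matrix.of fun j i => if s j = i then 1 else 0

/-- A row-stochastic matrix: nonnegative entries, rows summing to one. -/
def RowStochastic {n m : ℕ} (F : Matrix (Fin m) (Fin n) ℝ) : Prop :=
  (∀ j i, 0 ≤ F j i) ∧ ∀ j, ∑ i, F j i = 1

/-- A deterministic policy: a section of the state projection `s`. -/
def IsPolicy {n m : ℕ} (s : Fin m → Fin n) (π : Fin n → Fin m) : Prop :=
  ∀ i, s (π i) = i

/-- The value vector `V_{π,R} = (I − γΠF)⁻¹ Π R`. -/
def valueVec {n m : ℕ} (γ : ℝ) (F : Matrix (Fin m) (Fin n) ℝ)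
    (π : Fin n → Fin m) (R : Fin m → ℝ) : Fin n → ℝ :=
  ((1 : Matrix (Fin n) (Fin n) ℝ) - γ • (polMat π * F))⁻¹ *ᵥ (polMat π *ᵥ R)

/-- A policy is optimal for `R` when its value vector dominates all others componentwise. -/
def IsOptimal {n m : ℕ} (s : Fin m → Fin n) (γ : ℝ) (F : Matrix (Fin m) (Fin n) ℝ)
    (R : Fin m → ℝ) (π : Fin n → Fin m) : Prop :=
  IsPolicy s π ∧ ∀ π', IsPolicy s π' → ∀ i, valueVec γ F π' R i ≤ valueVec γ F π R i

/-- `hmax R i = max_{j ∈ U_i} R j`. -/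
def hmax {n m : ℕ} (s : Fin m → Fin n) (R : Fin m → ℝ) (i : Fin n) : ℝ :=
  sSup {x | ∃ j, s j = i ∧ R j = x}


lemma sub_stochastic_nonpos {n : ℕ} (hn : 1 ≤ n) (γ : ℝ) (hγ0 : 0 ≤ γ) (hγ1 : γ < 1)
    (P : Matrix (Fin n) (Fin n) ℝ) (hP0 : ∀ i k, 0 ≤ P i k) (hP1 : ∀ i, ∑ k, P i k = 1)
    (x : Fin n → ℝ) (hx : ∀ i, x i ≤ γ * (P *ᵥ x) i) : x ≤ 0 := by
  have hne : Nonempty (Fin n) := ⟨⟨0, hn⟩⟩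
  obtain ⟨i0, -, hi0⟩ := Finset.exists_max_image Finset.univ x ⟨Classical.arbitrary _, Finset.mem_univ _⟩
  have hPx : (P *ᵥ x) i0 ≤ x i0 := by
    calc (P *ᵥ x) i0 = ∑ k, P i0 k * x k := rfl
    _ ≤ ∑ k, P i0 k * x i0 := by
        apply Finset.sum_le_sum
        intro k _
        exact mul_le_mul_of_nonneg_left (hi0 k (Finset.mem_univ k)) (hP0 i0 k)
    _ = x i0 := by rw [← Finset.sum_mul, hP1, one_mul]
  have h1 : x i0 ≤ γ * x i0 :=
    (hx i0).trans (mul_le_mul_of_nonneg_left hPx hγ0)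
  have h2 : x i0 ≤ 0 := by nlinarith
  intro i
  exact (hi0 i (Finset.mem_univ i)).trans h2

lemma polMat_mulVec {n m : ℕ} (π : Fin n → Fin m) (R : Fin m → ℝ) (i : Fin n) :
    (polMat π *ᵥ R) i = R (π i) := by
  simp [polMat, Matrix.mulVec, dotProduct, ite_mul]

lemma polMat_mul_apply {n m : ℕ} (π : Fin n → Fin m) (F : Matrix (Fin m) (Fin n) ℝ)
    (i : Fin n) (k : Fin n) : (polMat π * F) i k = F (π i) k := by
  simp [polMat, Matrix.mul_apply, ite_mul]

lemma projMat_mulVec {n m : ℕ} (s : Fin m → Fin n) (Δ : Fin n → ℝ) (j : Fin m) :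
    (projMat s *ᵥ Δ) j = Δ (s j) := by
  simp [projMat, Matrix.mulVec, dotProduct, ite_mul]

/-- Bellman equation for `valueVec`. -/
lemma valueVec_eq {n m : ℕ} (hn : 1 ≤ n) (γ : ℝ) (hγ0 : 0 ≤ γ) (hγ1 : γ < 1)
    (F : Matrix (Fin m) (Fin n) ℝ) (hF : RowStochastic F)
    (π : Fin n → Fin m) (R : Fin m → ℝ) (i : Fin n) :
    valueVec γ F π R i = R (π i) + γ * ((polMat π * F) *ᵥ valueVec γ F π R) i := by
  set P : Matrix (Fin n) (Fin n) ℝ := polMat π * F with hPdef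
  have hP0 : ∀ i k, 0 ≤ P i k := fun i k => by rw [hPdef, polMat_mul_apply]; exact hF.1 _ _
  have hP1 : ∀ i, ∑ k, P i k = 1 := fun i => by
    simp only [hPdef, polMat_mul_apply]; exact hF.2 _
  set A : Matrix (Fin n) (Fin n) ℝ := 1 - γ • P with hAdef
  have hinj : Function.Injective A.mulVec := by
    intro x y hxy
    have hz : A *ᵥ (x - y) = 0 := by rw [Matrix.mulVec_sub, hxy, sub_self]
    set z := x - y with hzdef
    have hz' : ∀ i, z i = γ * (P *ᵥ z) i := by
      intro i
      have := congrFun hz i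
      simp only [hAdef, Matrix.sub_mulVec, Matrix.smul_mulVec, Matrix.one_mulVec,
        Pi.sub_apply, Pi.smul_apply, smul_eq_mul, Pi.zero_apply] at this
      linarith
    have h1 : z ≤ 0 := sub_stochastic_nonpos hn γ hγ0 hγ1 P hP0 hP1 z (fun i => (hz' i).le)
    have h2 : (-z) ≤ 0 := by
      apply sub_stochastic_nonpos hn γ hγ0 hγ1 P hP0 hP1
      intro i
      have : (P *ᵥ (-z)) i = -((P *ᵥ z) i) := by rw [Matrix.mulVec_neg]; rfl
      rw [this]; simp only [Pi.neg_apply]; linarith [hz' i]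
    have : z = 0 := by
      funext i
      exact le_antisymm (h1 i) (by simpa using h2 i)
    exact sub_eq_zero.mp this
  have hU : IsUnit A := Matrix.mulVec_injective_iff_isUnit.mp hinj
  have hAV : A *ᵥ valueVec γ F π R = polMat π *ᵥ R := by
    rw [valueVec, Matrix.mulVec_mulVec, Matrix.mul_nonsing_inv _
      ((Matrix.isUnit_iff_isUnit_det A).mp hU), Matrix.one_mulVec]
  have := congrFun hAV i
  simp only [hAdef, Matrix.sub_mulVec, Matrix.smul_mulVec, Matrix.one_mulVec,
    Pi.sub_apply, Pi.smul_apply, smul_eq_mul] at this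
  rw [polMat_mulVec] at this
  linarith

/-- For `R ≤ 0`, the admissible set admits the purely linear description
`D(R) = {Δ : Δ ≤ 0 ∧ R + BΔ ≤ 0}`. -/
theorem admissible_set_linear_description {n m : ℕ} (hn : 1 ≤ n) (hm : 1 ≤ m)
    (s : Fin m → Fin n) (hs : Function.Surjective s)
    (γ : ℝ) (hγ0 : 0 ≤ γ) (hγ1 : γ < 1)
    (F : Matrix (Fin m) (Fin n) ℝ) (hF : RowStochastic F)
    (R : Fin m → ℝ) (hR : R ≤ 0)
    (πs : Fin n → Fin m) (hπs : IsOptimal s γ F R πs) :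
    {Δ : Fin n → ℝ | R + (γ • F - projMat s) *ᵥ Δ ≤ 0} ∩
        {Δ : Fin n → ℝ | ∀ i, |valueVec γ F πs R i - Δ i| ≤ |valueVec γ F πs R i|} =
      {Δ : Fin n → ℝ | Δ ≤ 0 ∧ R + (γ • F - projMat s) *ᵥ Δ ≤ 0} := by
  set V := valueVec γ F πs R with hVdef
  set P : Matrix (Fin n) (Fin n) ℝ := polMat πs * F with hPdef
  have hP0 : ∀ i k, 0 ≤ P i k := fun i k => by rw [hPdef, polMat_mul_apply]; exact hF.1 _ _
  have hP1 : ∀ i, ∑ k, P i k = 1 := fun i => by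
    simp only [hPdef, polMat_mul_apply]; exact hF.2 _
  have hBell : ∀ i, V i = R (πs i) + γ * (P *ᵥ V) i :=
    valueVec_eq hn γ hγ0 hγ1 F hF πs R
  -- V ≤ 0
  have hV0 : V ≤ 0 := by
    apply sub_stochastic_nonpos hn γ hγ0 hγ1 P hP0 hP1
    intro i
    have := hBell i
    have hRi := hR (πs i)
    simp only [Pi.zero_apply] at hRi
    linarith
  -- From the linear constraint: V ≤ Δ
  have hVle : ∀ Δ : Fin n → ℝ, (R + (γ • F - projMat s) *ᵥ Δ ≤ 0) → ∀ i, V i ≤ Δ i := by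
    intro Δ hΔ i
    have key : ∀ i, Δ i ≥ R (πs i) + γ * (P *ᵥ Δ) i := by
      intro i
      have := hΔ (πs i)
      simp only [Pi.add_apply, Pi.zero_apply, Matrix.sub_mulVec,
        Matrix.smul_mulVec, Pi.sub_apply, Pi.smul_apply, smul_eq_mul] at this
      rw [projMat_mulVec, hπs.1 i] at this
      have hPΔ : (P *ᵥ Δ) i = (F *ᵥ Δ) (πs i) := by
        simp only [hPdef, Matrix.mulVec, dotProduct, polMat_mul_apply]
      rw [hPΔ]; linarith
    have hsub : (fun i => V i - Δ i) ≤ 0 := by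
      apply sub_stochastic_nonpos hn γ hγ0 hγ1 P hP0 hP1
      intro i
      have h1 := hBell i
      have h2 := key i
      have h3 : (P *ᵥ fun i => V i - Δ i) i = (P *ᵥ V) i - (P *ᵥ Δ) i := by
        have : (fun i => V i - Δ i) = V - Δ := rfl
        rw [this, Matrix.mulVec_sub]; rfl
      rw [h3]; linarith
    have h4 := hsub i
    simp only [Pi.zero_apply] at h4
    linarith
  ext Δ
  simp only [Set.mem_inter_iff, Set.mem_setOf_eq]
  constructor
  · rintro ⟨h1, h2⟩
    refine ⟨?_, h1⟩
    intro i
    show Δ i ≤ (0:ℝ)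
    have habs := abs_le.mp (h2 i)
    have : |V i| = -V i := abs_of_nonpos (hV0 i)
    rw [this] at habs
    linarith [habs.1]
  · rintro ⟨hΔ0, h1⟩
    refine ⟨h1, ?_⟩
    intro i
    have hV := hV0 i
    have hD := hΔ0 i
    have hVΔ := hVle Δ h1 i
    rw [abs_of_nonpos hV, abs_le]
    constructor <;> simp only [Pi.zero_apply] at * <;> linarith
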